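/- arXiv:1202.0779 — 7 statements merged into one kernel-verified Lean document; each statement's English description precedes it below -/
import Mathlib

section
/- Let f : ℝ^N → ℝ^N be a continuous injective map with f(0)=0, and let p ∈ ℝ^N. If ‖f^{2n}(p)‖ → ∞ as n → ∞, then ‖f^{n}(p)‖ → ∞ as n → ∞. -/
/-! A continuous `f` maps compact sets to compact sets, so if the even iterates
`f (f^[2n+1] p)` leave every compact set, so do the odd iterates `f^[2n+1] p`. -/

open Filter

theorem Filter.Tendsto.of_even_odd {α : Type*} {u : ℕ → α} {l : Filter α}
    (heven : Tendsto (fun n => u (2 * n)) atTop l)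
    (hodd : Tendsto (fun n => u (2 * n + 1)) atTop l) : Tendsto u atTop l := by
  intro s hs
  obtain ⟨N, hN⟩ := eventually_atTop.1 ((heven.eventually_mem hs).and (hodd.eventually_mem hs))
  refine mem_atTop_sets.2 ⟨2 * N, fun n hn => ?_⟩
  obtain ⟨m, rfl | rfl⟩ := Nat.even_or_odd' n
  · exact (hN m (by omega)).1
  · exact (hN m (by omega)).2

theorem Continuous.tendsto_iterate_cocompact_of_even {X : Type*} [TopologicalSpace X]
    {f : X → X} (hf : Continuous f) {p : X}
    (h : Tendsto (fun n => f^[2 * n] p) atTop (cocompact X)) :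
    Tendsto (fun n => f^[n] p) atTop (cocompact X) := by
  refine h.of_even_odd ?_
  have hsucc : Tendsto (fun n => f (f^[2 * n + 1] p)) atTop (cocompact X) := by
    simpa only [Function.comp_def, ← Function.iterate_succ_apply' f, Nat.succ_eq_add_one,
      mul_add] using h.comp (tendsto_add_atTop_nat 1)
  exact hsucc.of_tendsto_comp (comap_cocompact_le hf)

theorem stmt_1_general (N : ℕ) (f : EuclideanSpace ℝ (Fin N) → EuclideanSpace ℝ (Fin N))
    (hcont : Continuous f)
    (p : EuclideanSpace ℝ (Fin N))
    (h : Filter.Tendsto (fun n => ‖f^[2 * n] p‖) Filter.atTop Filter.atTop) :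
    Filter.Tendsto (fun n => ‖f^[n] p‖) Filter.atTop Filter.atTop := by
  rw [tendsto_norm_atTop_iff_cobounded, Metric.cobounded_eq_cocompact] at h ⊢
  exact hcont.tendsto_iterate_cocompact_of_even h

/-- If `‖f^[2n] p‖ → ∞`, then `‖f^[n] p‖ → ∞`, for a continuous injective
`f : ℝ^N → ℝ^N` with `f 0 = 0`. -/
theorem stmt_1 (N : ℕ) (f : EuclideanSpace ℝ (Fin N) → EuclideanSpace ℝ (Fin N))
    (hcont : Continuous f) (hinj : Function.Injective f) (h0 : f 0 = 0)
    (p : EuclideanSpace ℝ (Fin N))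
    (h : Filter.Tendsto (fun n => ‖f^[2 * n] p‖) Filter.atTop Filter.atTop) :
    Filter.Tendsto (fun n => ‖f^[n] p‖) Filter.atTop Filter.atTop :=
  stmt_1_general N f hcont p h
end

section
/- Let g : [0,1) → [0,1) be continuous and injective with Fix(g) = {0}. If 0 is a local attractor for g (there is a neighbourhood of 0 all of whose points have orbits converging to 0), then 0 is a global attractor: for every x ∈ [0,1), gⁿ(x) → 0 as n → ∞. -/
/-!
Since `0` is the only fixed point, the intermediate value theorem forces `g x - x` to have
constant sign on `(0,1)`. If `g x < x` there, every orbit decreases, hence converges, and its limit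
is a fixed point, i.e. `0`. If `g x > x`, orbits increase, so no point other than `0` is attracted
to `0`, contradicting local attraction.
-/

open Set Filter Topology Function

theorem forall_map_lt_or_forall_lt_map_of_isPreconnected {α : Type*} [TopologicalSpace α]
    [LinearOrder α] [OrderClosedTopology α] {f : α → α} {s : Set α} (hs : IsPreconnected s)
    (hf : ContinuousOn f s) (hfix : ∀ x ∈ s, f x ≠ x) :
    (∀ x ∈ s, f x < x) ∨ (∀ x ∈ s, x < f x) := by
  by_contra! ⟨⟨a, ha, hfa⟩, ⟨b, hb, hfb⟩⟩
  obtain ⟨c, hc, hfc⟩ := hs.intermediate_value₂ ha hb continuousOn_id hf hfa hfb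
  exact hfix c hc hfc.symm

section OrderTopology

variable {α : Type*} [ConditionallyCompleteLinearOrder α] [TopologicalSpace α] [OrderTopology α]
  {f : α → α}

theorem exists_isFixedPt_tendsto_iterate_of_map_le (hf : Continuous f) (hle : ∀ y, f y ≤ y)
    {x : α} (hbdd : BddBelow (range fun n => f^[n] x)) :
    ∃ y, IsFixedPt f y ∧ Tendsto (fun n => f^[n] x) atTop (𝓝 y) := by
  have hanti : Antitone fun n => f^[n] x :=
    antitone_nat_of_succ_le fun n => by rw [iterate_succ_apply']; exact hle _
  have hlim := tendsto_atTop_ciInf hanti hbdd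
  exact ⟨_, isFixedPt_of_tendsto_iterate hlim hf.continuousAt, hlim⟩

theorem tendsto_iterate_of_isBot [DenselyOrdered α] (hf : Continuous f) {z : α} (hbot : IsBot z)
    (hfix : ∀ x, IsFixedPt f x ↔ x = z)
    (hloc : ∀ᶠ x in 𝓝 z, Tendsto (fun n => f^[n] x) atTop (𝓝 z)) (x : α) :
    Tendsto (fun n => f^[n] x) atTop (𝓝 z) := by
  have hfz : IsFixedPt f z := (hfix z).2 rfl
  have hne : ∀ y ∈ Ioi z, f y ≠ y := fun y hy h => hy.ne' ((hfix y).1 h)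
  rcases forall_map_lt_or_forall_lt_map_of_isPreconnected isPreconnected_Ioi hf.continuousOn
    hne with hlt | hgt
  · have hle : ∀ y, f y ≤ y := fun y =>
      (hbot y).eq_or_lt.elim (fun h => (h ▸ hfz).le) (fun h => (hlt y h).le)
    obtain ⟨y, hy, hlim⟩ := exists_isFixedPt_tendsto_iterate_of_map_le (x := x) hf hle
      ⟨z, forall_mem_range.2 fun n => hbot _⟩
    rwa [(hfix y).1 hy] at hlim
  · rcases (hbot x).eq_or_lt with rfl | hzx
    · simp [iterate_fixed hfz]
    have hge : ∀ y, y ≤ f y := fun y =>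
      (hbot y).eq_or_lt.elim (fun h => (h ▸ hfz).ge) (fun h => (hgt y h).le)
    have := nhdsGT_neBot_of_exists_gt ⟨x, hzx⟩
    obtain ⟨y, hzy, hy⟩ :=
      ((eventually_mem_nhdsWithin (s := Ioi z)).and (nhdsWithin_le_nhds hloc)).exists
    exact absurd (ge_of_tendsto' hy fun n => id_le_iterate_of_id_le hge n y) (not_le.2 hzy)

end OrderTopology

theorem stmt_2_general (g : Set.Ico (0:ℝ) 1 → Set.Ico (0:ℝ) 1)
    (hcont : Continuous g)
    (z : Set.Ico (0:ℝ) 1) (hz : (z : ℝ) = 0)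
    (hfix : ∀ x, g x = x ↔ x = z)
    (hloc : ∃ U ∈ nhds z, ∀ x ∈ U,
      Filter.Tendsto (fun n => g^[n] x) Filter.atTop (nhds z)) :
    ∀ x, Filter.Tendsto (fun n => g^[n] x) Filter.atTop (nhds z) := by
  -- needed for the instance `ordConnectedSubsetConditionallyCompleteLinearOrder` on `Ico 0 1`
  have : Inhabited (Set.Ico (0:ℝ) 1) := ⟨z⟩
  have hbot : IsBot z := fun x => by rw [← Subtype.coe_le_coe, hz]; exact x.2.1
  exact tendsto_iterate_of_isBot hcont hbot hfix (eventually_iff_exists_mem.2 hloc)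

/-- A continuous injective map of `[0,1)` whose only fixed point `0` is a local
attractor has `0` as a global attractor. -/
theorem stmt_2 (g : Set.Ico (0:ℝ) 1 → Set.Ico (0:ℝ) 1)
    (hcont : Continuous g) (hinj : Function.Injective g)
    (z : Set.Ico (0:ℝ) 1) (hz : (z : ℝ) = 0)
    (hfix : ∀ x, g x = x ↔ x = z)
    (hloc : ∃ U ∈ nhds z, ∀ x ∈ U,
      Filter.Tendsto (fun n => g^[n] x) Filter.atTop (nhds z)) :
    ∀ x, Filter.Tendsto (fun n => g^[n] x) Filter.atTop (nhds z) :=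
  stmt_2_general g hcont z hz hfix hloc
end

section
/- Let A : ℝ^N → ℝ^N be a linear map all of whose (complex) eigenvalues λ satisfy α < |λ| < β for given reals 0 < α < β. Then there exists an inner product on ℝ^N whose associated norm ‖·‖ satisfies α‖x‖ ≤ ‖Ax‖ ≤ β‖x‖ for all x ∈ ℝ^N. -/
/-!
The adapted inner product is `⟪x, y⟫ = ∑_{j ∈ ℤ} w_j (A^j x ⬝ A^j y)` with weights
`w_j = min (α^(-2j)) (β^(-2j))`. These satisfy `α² w_j ≤ w_{j-1} ≤ β² w_j`, so after the index
shift `j ↦ j + 1` the series for `⟪A x, A x⟫` lies termwise between `α² ⟪x, x⟫` and `β² ⟪x, x⟫`.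
The series converges because, by Gelfand's formula, eventually `‖A^n‖ ≤ ρ^n` for some `ρ < β`
and `‖A^(-n)‖ ≤ σ^n` for some `σ < α⁻¹`, the eigenvalues of `A⁻¹` being the inverses of those
of `A`.
-/

open Filter Topology
-- The Frobenius norm is invariant under transposition, which bounds the Gram terms `Pᵀ * P`.
open scoped Matrix Matrix.Norms.Frobenius

section Gelfand

variable {𝒜 : Type*} [NormedRing 𝒜] [NormedAlgebra ℂ 𝒜] [CompleteSpace 𝒜]

theorem spectrum.exists_eventually_norm_pow_le (a : 𝒜) {r : ℝ} (hr : 0 < r)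
    (h : ∀ z ∈ spectrum ℂ a, ‖z‖ < r) :
    ∃ ρ, 0 ≤ ρ ∧ ρ < r ∧ ∀ᶠ n in atTop, ‖a ^ n‖ ≤ ρ ^ n := by
  rcases subsingleton_or_nontrivial 𝒜 with h𝒜 | h𝒜
  · exact ⟨0, le_rfl, hr, .of_forall fun n => by simp [Subsingleton.elim (a ^ n) 0]⟩
  have hlt : spectralRadius ℂ a < (r.toNNReal : ENNReal) :=
    spectrum.spectralRadius_lt_of_forall_lt a fun z hz => by
      rw [← NNReal.coe_lt_coe, coe_nnnorm, Real.coe_toNNReal _ hr.le]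
      exact h z hz
  obtain ⟨ρ, hρa, hρr⟩ := ENNReal.lt_iff_exists_nnreal_btwn.mp hlt
  refine ⟨ρ, ρ.2, Real.lt_toNNReal_iff_coe_lt.mp (ENNReal.coe_lt_coe.mp hρr), ?_⟩
  filter_upwards [(spectrum.pow_norm_pow_one_div_tendsto_nhds_spectralRadius a).eventually_lt_const
    hρa, eventually_ne_atTop 0] with n hn hn0
  rw [← ENNReal.ofReal_coe_nnreal, ENNReal.ofReal_lt_ofReal_iff_of_nonneg (by positivity)] at hn
  calc ‖a ^ n‖ = (‖a ^ n‖ ^ (1 / n : ℝ)) ^ n := by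
        rw [one_div, Real.rpow_inv_natCast_pow (norm_nonneg _) hn0]
    _ ≤ ρ ^ n := by gcongr

theorem summable_sq_norm_pow_div_of_forall_spectrum_lt (a : 𝒜) {r : ℝ} (hr : 0 < r)
    (h : ∀ z ∈ spectrum ℂ a, ‖z‖ < r) : Summable fun n : ℕ => (‖a ^ n‖ / r ^ n) ^ 2 := by
  obtain ⟨ρ, hρ, hρr, hbound⟩ := spectrum.exists_eventually_norm_pow_le a hr h
  have hq : (ρ / r) ^ 2 < 1 := pow_lt_one₀ (by positivity) ((div_lt_one hr).mpr hρr) two_ne_zero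
  refine (summable_geometric_of_lt_one (by positivity) hq).of_norm_bounded_eventually_nat ?_
  filter_upwards [hbound] with n hn
  calc ‖(‖a ^ n‖ / r ^ n) ^ 2‖ = (‖a ^ n‖ / r ^ n) ^ 2 := Real.norm_of_nonneg (by positivity)
    _ ≤ (ρ ^ n / r ^ n) ^ 2 := by gcongr
    _ = ((ρ / r) ^ 2) ^ n := by rw [← div_pow, ← pow_mul, ← pow_mul, mul_comm]

end Gelfand

theorem spectrum.norm_lt_inv_of_units_inv {𝕜 R : Type*} [NormedField 𝕜] [Ring R] [Algebra 𝕜 R]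
    (a : Rˣ) {α : ℝ} (hα : 0 < α) (h : ∀ z ∈ spectrum 𝕜 (a : R), α < ‖z‖) :
    ∀ z ∈ spectrum 𝕜 (↑a⁻¹ : R), ‖z‖ < α⁻¹ := by
  intro z hz
  rw [← spectrum.map_inv, Set.mem_inv] at hz
  have hz' := h _ hz
  rw [norm_inv] at hz'
  have hpos : 0 < ‖z‖ := by
    by_contra hle
    rw [le_antisymm (not_lt.mp hle) (norm_nonneg z), inv_zero] at hz'
    exact hα.not_gt hz'
  exact (lt_inv_comm₀ hα hpos).mp hz'

theorem Matrix.isUnit_of_isUnit_map {ι K L : Type*} [Fintype ι] [DecidableEq ι] [Field K]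
    [Field L] (f : K →+* L) {M : Matrix ι ι K} (h : IsUnit (M.map f)) : IsUnit M := by
  rw [Matrix.isUnit_iff_isUnit_det] at h ⊢
  rw [← RingHom.mapMatrix_apply, ← RingHom.map_det, isUnit_iff_ne_zero, map_ne_zero] at h
  exact h.isUnit

theorem Matrix.summable_sq_norm_pow_div_of_forall_spectrum_lt {ι : Type*} [Fintype ι]
    [DecidableEq ι] (M : Matrix ι ι ℝ) {r : ℝ} (hr : 0 < r)
    (h : ∀ z ∈ spectrum ℂ (M.map Complex.ofReal), ‖z‖ < r) :
    Summable fun n : ℕ => (‖M ^ n‖ / r ^ n) ^ 2 := by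
  convert _root_.summable_sq_norm_pow_div_of_forall_spectrum_lt _ hr h using 4 with n
  rw [show M.map Complex.ofReal ^ n = (M ^ n).map Complex.ofReal from
    (Matrix.map_pow M Complex.ofRealHom n).symm]
  exact (congrArg NNReal.toReal (Matrix.frobenius_nnnorm_map_eq _ _ fun x => by simp)).symm

noncomputable def adaptedWeight (s t : ℝ) (j : ℤ) : ℝ := min (s ^ (-j)) (t ^ (-j))

section adaptedWeight

variable {s t : ℝ}

theorem adaptedWeight_pos (hs : 0 < s) (ht : 0 < t) (j : ℤ) : 0 < adaptedWeight s t j :=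
  lt_min (zpow_pos hs _) (zpow_pos ht _)

theorem adaptedWeight_sub_one (hs : s ≠ 0) (ht : t ≠ 0) (j : ℤ) :
    adaptedWeight s t (j - 1) = min (s ^ (-j) * s) (t ^ (-j) * t) := by
  rw [adaptedWeight, neg_sub', sub_neg_eq_add, zpow_add_one₀ hs, zpow_add_one₀ ht]

theorem mul_adaptedWeight_le (hs : 0 < s) (hst : s ≤ t) (j : ℤ) :
    s * adaptedWeight s t j ≤ adaptedWeight s t (j - 1) := by
  have ht := hs.trans_le hst
  rw [adaptedWeight_sub_one hs.ne' ht.ne', adaptedWeight, mul_min_of_nonneg _ _ hs.le,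
    mul_comm s, mul_comm s]
  exact min_le_min le_rfl (mul_le_mul_of_nonneg_left hst (zpow_pos ht _).le)

theorem adaptedWeight_sub_one_le (hs : 0 < s) (hst : s ≤ t) (j : ℤ) :
    adaptedWeight s t (j - 1) ≤ t * adaptedWeight s t j := by
  have ht := hs.trans_le hst
  rw [adaptedWeight_sub_one hs.ne' ht.ne', adaptedWeight, mul_min_of_nonneg _ _ ht.le,
    mul_comm t, mul_comm t]
  exact min_le_min (mul_le_mul_of_nonneg_left hst (zpow_pos hs _).le) le_rfl

end adaptedWeight

theorem summable_adaptedWeight_mul_sq_norm_zpow {R : Type*} [NormedRing R] (u : Rˣ) {α β : ℝ}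
    (hα : 0 < α) (hβ : 0 < β)
    (hu : Summable fun n : ℕ => (‖(u : R) ^ n‖ / β ^ n) ^ 2)
    (hu' : Summable fun n : ℕ => (‖(↑u⁻¹ : R) ^ n‖ / α⁻¹ ^ n) ^ 2) :
    Summable fun j : ℤ => adaptedWeight (α ^ 2) (β ^ 2) j * ‖((u ^ j : Rˣ) : R)‖ ^ 2 := by
  have hw (j : ℤ) := mul_nonneg (adaptedWeight_pos (pow_pos hα 2) (pow_pos hβ 2) j).le
    (sq_nonneg ‖((u ^ j : Rˣ) : R)‖)
  refine .of_nat_of_neg (hu.of_nonneg_of_le (fun n => hw n) fun n => ?_)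
    (hu'.of_nonneg_of_le (fun n => hw (-n)) fun n => ?_)
  · calc adaptedWeight (α ^ 2) (β ^ 2) n * ‖((u ^ (n : ℤ) : Rˣ) : R)‖ ^ 2
        ≤ (β ^ 2) ^ (-(n : ℤ)) * ‖((u ^ (n : ℤ) : Rˣ) : R)‖ ^ 2 := by
          gcongr; exact min_le_right _ _
      _ = (‖(u : R) ^ n‖ / β ^ n) ^ 2 := by
          rw [zpow_neg, zpow_natCast, zpow_natCast, Units.val_pow_eq_pow_val]; ring
  · calc adaptedWeight (α ^ 2) (β ^ 2) (-n) * ‖((u ^ (-n : ℤ) : Rˣ) : R)‖ ^ 2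
        ≤ (α ^ 2) ^ (-(-n : ℤ)) * ‖((u ^ (-n : ℤ) : Rˣ) : R)‖ ^ 2 := by
          gcongr; exact min_le_left _ _
      _ = (‖(↑u⁻¹ : R) ^ n‖ / α⁻¹ ^ n) ^ 2 := by
          rw [neg_neg, zpow_natCast, zpow_neg, zpow_natCast, ← inv_pow, Units.val_pow_eq_pow_val,
            inv_pow, div_inv_eq_mul]
          ring

theorem dotProduct_self_nonneg {ι : Type*} [Fintype ι] (v : ι → ℝ) : 0 ≤ v ⬝ᵥ v := by
  simpa using dotProduct_self_star_nonneg v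

theorem summable_smul_transpose_mul {ι κ : Type*} [Fintype ι] {P : κ → Matrix ι ι ℝ}
    {w : κ → ℝ} (hw : 0 ≤ w) (h : Summable fun k => w k * ‖P k‖ ^ 2) :
    Summable fun k => w k • ((P k)ᵀ * P k) := by
  refine h.of_norm_bounded fun k => ?_
  calc ‖w k • ((P k)ᵀ * P k)‖ = w k * ‖(P k)ᵀ * P k‖ := by
        rw [norm_smul, Real.norm_of_nonneg (hw k)]
    _ ≤ w k * (‖(P k)ᵀ‖ * ‖P k‖) := by gcongr; exacts [hw k, Matrix.frobenius_norm_mul _ _]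
    _ = w k * ‖P k‖ ^ 2 := by rw [Matrix.frobenius_norm_transpose, sq]

section weightedGram

variable {ι κ : Type*} [Fintype ι] [DecidableEq ι]

noncomputable def weightedGramForm (P : κ → Matrix ι ι ℝ) (w : κ → ℝ) :
    (ι → ℝ) →ₗ[ℝ] (ι → ℝ) →ₗ[ℝ] ℝ :=
  Matrix.toLinearMap₂' ℝ (∑' k, w k • ((P k)ᵀ * P k))

variable {P : κ → Matrix ι ι ℝ} {w : κ → ℝ}

theorem hasSum_weightedGramForm (h : Summable fun k => w k • ((P k)ᵀ * P k)) (x y : ι → ℝ) :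
    HasSum (fun k => w k * (P k *ᵥ x ⬝ᵥ P k *ᵥ y)) (weightedGramForm P w x y) := by
  let L : Matrix ι ι ℝ →ₗ[ℝ] ℝ :=
    (LinearMap.applyₗ y).comp ((LinearMap.applyₗ x).comp (Matrix.toLinearMap₂' ℝ).toLinearMap)
  have hL : ∀ k, L (w k • ((P k)ᵀ * P k)) = w k * (P k *ᵥ x ⬝ᵥ P k *ᵥ y) := fun k => by
    simp only [L, LinearMap.coe_comp, Function.comp_apply, LinearEquiv.coe_coe,
      LinearMap.applyₗ_apply_apply, Matrix.toLinearMap₂'_apply']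
    rw [Matrix.smul_mulVec, ← Matrix.mulVec_mulVec, dotProduct_smul, Matrix.dotProduct_mulVec,
      Matrix.vecMul_transpose, smul_eq_mul]
  have hmap := h.hasSum.mapL (LinearMap.toContinuousLinearMap L)
  simp only [LinearMap.coe_toContinuousLinearMap', hL] at hmap
  exact hmap

theorem weightedGramForm_comm (h : Summable fun k => w k • ((P k)ᵀ * P k)) (x y : ι → ℝ) :
    weightedGramForm P w x y = weightedGramForm P w y x :=
  (hasSum_weightedGramForm h x y).unique <| by
    simpa only [dotProduct_comm] using hasSum_weightedGramForm h y x

end weightedGram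

section orbit

variable {ι : Type*} [Fintype ι] [DecidableEq ι] {A : Matrix ι ι ℝ} {P : ℤ → Matrix ι ι ℝ}
  {w : ℤ → ℝ} (h : Summable fun j => w j • ((P j)ᵀ * P j))
include h

theorem weightedGramForm_self_pos (hw : 0 ≤ w) (hw0 : 0 < w 0) (hP0 : P 0 = 1) {x : ι → ℝ}
    (hx : x ≠ 0) : 0 < weightedGramForm P w x x := by
  have hx' : 0 < x ⬝ᵥ x := (dotProduct_self_nonneg x).lt_of_ne' (by simpa using hx)
  refine lt_of_lt_of_le ?_ (le_hasSum (hasSum_weightedGramForm h x x) 0 fun j _ =>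
    mul_nonneg (hw j) (dotProduct_self_nonneg _))
  simpa [hP0] using mul_pos hw0 hx'

theorem hasSum_weightedGramForm_mulVec (hP : ∀ j, P (j + 1) = P j * A) (x : ι → ℝ) :
    HasSum (fun j => w (j - 1) * (P j *ᵥ x ⬝ᵥ P j *ᵥ x))
      (weightedGramForm P w (A *ᵥ x) (A *ᵥ x)) := by
  rw [← (Equiv.addRight (1 : ℤ)).hasSum_iff]
  convert hasSum_weightedGramForm h (A *ᵥ x) (A *ᵥ x) using 2 with j
  simp [hP, Matrix.mulVec_mulVec]

theorem weightedGramForm_mulVec_le {t : ℝ} (hP : ∀ j, P (j + 1) = P j * A)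
    (hw : ∀ j, w (j - 1) ≤ t * w j) (x : ι → ℝ) :
    weightedGramForm P w (A *ᵥ x) (A *ᵥ x) ≤ t * weightedGramForm P w x x :=
  hasSum_le (fun j => by rw [← mul_assoc]; gcongr; exacts [dotProduct_self_nonneg _, hw j])
    (hasSum_weightedGramForm_mulVec h hP x) ((hasSum_weightedGramForm h x x).mul_left t)

theorem le_weightedGramForm_mulVec {s : ℝ} (hP : ∀ j, P (j + 1) = P j * A)
    (hw : ∀ j, s * w j ≤ w (j - 1)) (x : ι → ℝ) :
    s * weightedGramForm P w x x ≤ weightedGramForm P w (A *ᵥ x) (A *ᵥ x) :=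
  hasSum_le (fun j => by rw [← mul_assoc]; gcongr; exacts [dotProduct_self_nonneg _, hw j])
    ((hasSum_weightedGramForm h x x).mul_left s) (hasSum_weightedGramForm_mulVec h hP x)

end orbit

theorem Matrix.summable_adaptedWeight_smul_transpose_mul {ι : Type*} [Fintype ι]
    [DecidableEq ι] (u : GL ι ℝ) {α β : ℝ} (hα : 0 < α) (hβ : 0 < β)
    (h : ∀ μ ∈ spectrum ℂ ((u : Matrix ι ι ℝ).map Complex.ofReal), α < ‖μ‖ ∧ ‖μ‖ < β) :
    Summable fun j : ℤ => adaptedWeight (α ^ 2) (β ^ 2) j •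
      ((↑(u ^ j) : Matrix ι ι ℝ)ᵀ * (↑(u ^ j) : Matrix ι ι ℝ)) := by
  refine summable_smul_transpose_mul
    (fun j => (adaptedWeight_pos (pow_pos hα 2) (pow_pos hβ 2) j).le)
    (summable_adaptedWeight_mul_sq_norm_zpow u hα hβ ?_ ?_)
  · exact Matrix.summable_sq_norm_pow_div_of_forall_spectrum_lt _ hβ fun z hz => (h z hz).2
  · exact Matrix.summable_sq_norm_pow_div_of_forall_spectrum_lt _ (inv_pos.mpr hα) <|
      spectrum.norm_lt_inv_of_units_inv (Matrix.GeneralLinearGroup.map Complex.ofRealHom u) hα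
        fun z hz => (h z hz).1

/-- Adapted norms: if every complex eigenvalue `λ` of a real `N × N` matrix `A`
satisfies `α < |λ| < β` (where `0 < α < β`), then there is an inner product on
`ℝ^N` whose norm `x ↦ √⟨x,x⟩` satisfies `α‖x‖ ≤ ‖Ax‖ ≤ β‖x‖`. -/
theorem stmt_12 (N : ℕ) (A : Matrix (Fin N) (Fin N) ℝ) (α β : ℝ)
    (hα : 0 < α) (hαβ : α < β)
    (heig : ∀ μ : ℂ, (A.map (Complex.ofReal)).charpoly.IsRoot μ →
      α < ‖μ‖ ∧ ‖μ‖ < β) :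
    ∃ B : (Fin N → ℝ) →ₗ[ℝ] (Fin N → ℝ) →ₗ[ℝ] ℝ,
      (∀ x y, B x y = B y x) ∧ (∀ x, x ≠ 0 → 0 < B x x) ∧
      ∀ x : Fin N → ℝ,
        α * Real.sqrt (B x x) ≤ Real.sqrt (B (A.mulVec x) (A.mulVec x)) ∧
        Real.sqrt (B (A.mulVec x) (A.mulVec x)) ≤ β * Real.sqrt (B x x) := by
  have hβ : 0 < β := hα.trans hαβ
  have hspec : ∀ μ ∈ spectrum ℂ (A.map Complex.ofReal), α < ‖μ‖ ∧ ‖μ‖ < β := fun μ hμ =>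
    heig μ (Matrix.mem_spectrum_iff_isRoot_charpoly.mp hμ)
  have hA : IsUnit A := Matrix.isUnit_of_isUnit_map Complex.ofRealHom <| by
    by_contra h0
    simpa [hα.not_gt] using hspec 0 (spectrum.zero_mem_iff ℂ |>.mpr h0)
  obtain ⟨u, rfl⟩ := hA
  have hsum := Matrix.summable_adaptedWeight_smul_transpose_mul u hα hβ hspec
  have hP (j : ℤ) : (↑(u ^ (j + 1)) : Matrix (Fin N) (Fin N) ℝ) =
      (↑(u ^ j) : Matrix (Fin N) (Fin N) ℝ) * (u : Matrix (Fin N) (Fin N) ℝ) := by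
    rw [zpow_add_one, Units.val_mul]
  have hw := adaptedWeight_pos (pow_pos hα 2) (pow_pos hβ 2)
  have hst : α ^ 2 ≤ β ^ 2 := pow_le_pow_left₀ hα.le hαβ.le 2
  have hsqrt {c : ℝ} (hc : 0 ≤ c) (a : ℝ) : c * √a = √(c ^ 2 * a) := by
    rw [Real.sqrt_mul (sq_nonneg _), Real.sqrt_sq hc]
  refine ⟨weightedGramForm (fun j : ℤ => (↑(u ^ j) : Matrix (Fin N) (Fin N) ℝ))
    (adaptedWeight (α ^ 2) (β ^ 2)), weightedGramForm_comm hsum, fun x hx =>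
    weightedGramForm_self_pos hsum (fun j => (hw j).le) (hw 0) (by simp) hx, fun x => ⟨?_, ?_⟩⟩
  · rw [hsqrt hα.le]
    exact Real.sqrt_le_sqrt (le_weightedGramForm_mulVec hsum hP
      (mul_adaptedWeight_le (pow_pos hα 2) hst) x)
  · rw [hsqrt hβ.le]
    exact Real.sqrt_le_sqrt (weightedGramForm_mulVec_le hsum hP
      (adaptedWeight_sub_one_le (pow_pos hα 2) hst) x)
end

section
/- Let f : ℝ^N → ℝ^N be continuous, differentiable at 0, with f(0) = 0, and suppose all eigenvalues of Df(0) have absolute value strictly less than 1. Then 0 is locally asymptotically stable: there is a neighbourhood of 0 on which f is a uniform contraction with respect to some norm, and all orbits starting in this neighbourhood converge to 0. -/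
/-!
Choose `n` with `‖Dⁿ‖ < 1`: it exists by Gelfand's formula, since the spectral radius of the
complexified matrix of `D` is `< 1`. Then `ν x = ∑_{k<n} ‖Dᵏ x‖` is a norm equivalent to `‖·‖` in
which `D` is a strict contraction, because `ν (D x) = ν x - ‖x‖ + ‖Dⁿ x‖`. As `f = D + o(‖x‖)`
near `0`, `f` is still a strict contraction for `ν` on a small `ν`-ball, which it therefore maps
into itself, and iterating gives geometric decay of every orbit.
-/

open Filter Topology Finset

theorem spectrum.eventually_norm_pow_lt_one {A : Type*} [NormedRing A] [NormedAlgebra ℂ A]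
    [CompleteSpace A] {a : A} (ha : ∀ z ∈ spectrum ℂ a, ‖z‖ < 1) :
    ∀ᶠ n : ℕ in atTop, ‖a ^ n‖ < 1 := by
  cases subsingleton_or_nontrivial A
  · exact Eventually.of_forall fun n => by simp [Subsingleton.elim (a ^ n) 0]
  have hρ : spectralRadius ℂ a < 1 := by
    simpa using spectrum.spectralRadius_lt_of_forall_lt a (r := 1) fun z hz => mod_cast ha z hz
  filter_upwards [(spectrum.pow_norm_pow_one_div_tendsto_nhds_spectralRadius a).eventually_lt_const
    hρ] with n hlt
  by_contra! h
  exact hlt.not_ge (ENNReal.one_le_ofReal.2 (Real.one_le_rpow h (by positivity)))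

section LinftyNorm

-- On `n → ℝ` with the sup norm, the ℓ∞ operator norm of `toMatrix' D` is `‖D‖`
-- (`Matrix.linfty_opNorm_toMatrix`), and it is a Banach algebra norm, as Gelfand's formula needs.

attribute [local instance] Matrix.linftyOpNormedAddCommGroup Matrix.linftyOpNormedRing
  Matrix.linftyOpNormedAlgebra

lemma Matrix.linfty_opNorm_map_ofReal {n : Type*} [Fintype n] (M : Matrix n n ℝ) :
    ‖M.map Complex.ofReal‖ = ‖M‖ := by
  simp [Matrix.linfty_opNorm_def]

theorem ContinuousLinearMap.exists_norm_pow_lt_one {n : Type*} [Fintype n] [DecidableEq n]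
    (D : (n → ℝ) →L[ℝ] (n → ℝ))
    (hD : ∀ μ : ℂ, ((LinearMap.toMatrix' (D : (n → ℝ) →ₗ[ℝ] (n → ℝ))).map
        Complex.ofReal).charpoly.IsRoot μ → ‖μ‖ < 1) :
    ∃ k ≠ 0, ‖D ^ k‖ < 1 := by
  set M := LinearMap.toMatrix' (D : (n → ℝ) →ₗ[ℝ] (n → ℝ))
  have hspec : ∀ z ∈ spectrum ℂ (M.map Complex.ofReal), ‖z‖ < 1 := fun z hz =>
    hD z (Matrix.mem_spectrum_iff_isRoot_charpoly.1 hz)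
  obtain ⟨k, hk, hk0⟩ :=
    ((spectrum.eventually_norm_pow_lt_one hspec).and (eventually_ne_atTop 0)).exists
  refine ⟨k, hk0, ?_⟩
  have hpow : LinearMap.toMatrix' ((D ^ k : (n → ℝ) →L[ℝ] (n → ℝ)) : (n → ℝ) →ₗ[ℝ] (n → ℝ))
      = M ^ k := by
    rw [ContinuousLinearMap.toLinearMap_pow]
    exact map_pow LinearMap.toMatrixAlgEquiv' _ k
  have hmap : (M ^ k).map Complex.ofReal = M.map Complex.ofReal ^ k :=
    map_pow Complex.ofRealHom.mapMatrix M k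
  rwa [← Matrix.linfty_opNorm_toMatrix, hpow, ← Matrix.linfty_opNorm_map_ofReal, hmap]

end LinftyNorm

namespace ContinuousLinearMap

variable {E : Type*} [SeminormedAddCommGroup E] [NormedSpace ℝ E] (D : E →L[ℝ] E) (n : ℕ)

noncomputable def adaptedSeminorm : Seminorm ℝ E :=
  ∑ k ∈ range n, (normSeminorm ℝ E).comp (D ^ k : E →L[ℝ] E).toLinearMap

variable {D n}

lemma adaptedSeminorm_apply (x : E) : adaptedSeminorm D n x = ∑ k ∈ range n, ‖(D ^ k) x‖ := by
  change FunLike.coeAddMonoidHom _ _ _ (adaptedSeminorm D n) x = _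
  rw [adaptedSeminorm, map_sum, Finset.sum_apply]
  rfl

lemma norm_le_adaptedSeminorm (hn : n ≠ 0) (x : E) : ‖x‖ ≤ adaptedSeminorm D n x := by
  rw [adaptedSeminorm_apply]
  simpa using single_le_sum (f := fun k => ‖(D ^ k) x‖) (fun _ _ => norm_nonneg _)
    (mem_range.2 (Nat.pos_of_ne_zero hn))

lemma adaptedSeminorm_le (x : E) :
    adaptedSeminorm D n x ≤ (∑ k ∈ range n, ‖D ^ k‖) * ‖x‖ := by
  rw [adaptedSeminorm_apply, sum_mul]
  exact sum_le_sum fun k _ => (D ^ k).le_opNorm x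

lemma adaptedSeminorm_apply_self_add_norm (x : E) :
    adaptedSeminorm D n (D x) + ‖x‖ = adaptedSeminorm D n x + ‖(D ^ n) x‖ := by
  have hshift : ∀ k, (D ^ k) (D x) = (D ^ (k + 1)) x := fun k => by
    rw [pow_succ]; rfl
  have htelescope := (sum_range_succ' (fun k => ‖(D ^ k) x‖) n).symm.trans (sum_range_succ _ n)
  simpa only [adaptedSeminorm_apply, hshift, pow_zero, one_apply_eq_self] using htelescope

theorem exists_adaptedSeminorm_apply_le (hDn : ‖D ^ n‖ < 1) :
    ∃ ρ, 0 ≤ ρ ∧ ρ < 1 ∧ ∀ x, adaptedSeminorm D n (D x) ≤ ρ * adaptedSeminorm D n x := by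
  set C := ∑ k ∈ range n, ‖D ^ k‖
  have hC : 0 ≤ C := sum_nonneg fun _ _ => norm_nonneg _
  set a := (1 - ‖D ^ n‖) / (C + 1)
  have ha0 : 0 < a := div_pos (by linarith) (by linarith)
  have ha1 : a ≤ 1 := (div_le_one (by linarith)).2 (by linarith [norm_nonneg (D ^ n)])
  refine ⟨1 - a, by linarith, by linarith, fun x => ?_⟩
  have hsmall : a * adaptedSeminorm D n x ≤ (1 - ‖D ^ n‖) * ‖x‖ := by
    calc a * adaptedSeminorm D n x ≤ a * ((C + 1) * ‖x‖) := by
          gcongr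
          linarith [adaptedSeminorm_le (D := D) (n := n) x, norm_nonneg x]
      _ = (1 - ‖D ^ n‖) * ‖x‖ := by rw [← mul_assoc, div_mul_cancel₀ _ (by linarith)]
  linarith [adaptedSeminorm_apply_self_add_norm (D := D) (n := n) x, (D ^ n).le_opNorm x]

end ContinuousLinearMap

theorem HasFDerivAt.exists_seminorm_contraction {E : Type*}
    [NormedAddCommGroup E] [NormedSpace ℝ E] {f : E → E} {D : E →L[ℝ] E}
    (hf : HasFDerivAt f D 0) (hf0 : f 0 = 0) (ν : Seminorm ℝ E) {K ρ : ℝ}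
    (hνK : ∀ x, ν x ≤ K * ‖x‖) (hν : ∀ x, ‖x‖ ≤ ν x) (hρ : ρ < 1)
    (hDν : ∀ x, ν (D x) ≤ ρ * ν x) :
    ∃ δ > 0, ∀ x, ν x < δ → ν (f x) ≤ (1 + ρ) / 2 * ν x := by
  have hrem : (fun x => f x - D x) =o[𝓝 0] fun x => x := by
    simpa [hf0] using hasFDerivAt_iff_isLittleO_nhds_zero.1 hf
  have hνrem : (fun x => ν (f x - D x)) =o[𝓝 0] fun x => ν x :=
    ((Asymptotics.IsBigO.of_bound K (Eventually.of_forall fun x => by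
        simpa [abs_of_nonneg (apply_nonneg ν _)] using hνK _)).trans_isLittleO hrem).trans_isBigO
      (Asymptotics.IsBigO.of_bound 1 (Eventually.of_forall fun x => by
        simpa [abs_of_nonneg (apply_nonneg ν _)] using hν x))
  obtain ⟨δ, hδ, hsmall⟩ :=
    Metric.eventually_nhds_iff.1 (hνrem.def (by linarith : 0 < (1 - ρ) / 2))
  refine ⟨δ, hδ, fun x hx => ?_⟩
  have hrem_le : ν (f x - D x) ≤ (1 - ρ) / 2 * ν x := by
    simpa [abs_of_nonneg (apply_nonneg ν _)] using
      hsmall (show dist x 0 < δ by simpa using (hν x).trans_lt hx)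
  calc ν (f x) = ν (D x + (f x - D x)) := by rw [add_sub_cancel]
    _ ≤ ν (D x) + ν (f x - D x) := map_add_le_add ν _ _
    _ ≤ (1 + ρ) / 2 * ν x := by linarith [hDν x]

theorem Function.iterate_le_pow_mul_of_le_mul {X : Type*} {g : X → X} {V : X → ℝ} {δ c : ℝ}
    (hV : ∀ x, 0 ≤ V x) (hc0 : 0 ≤ c) (hc1 : c ≤ 1) (hg : ∀ x, V x < δ → V (g x) ≤ c * V x)
    (m : ℕ) : ∀ x, V x < δ → V (g^[m] x) ≤ c ^ m * V x := by
  induction m with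
  | zero => simp
  | succ m ih =>
    intro x hx
    have hgx : V (g x) ≤ c * V x := hg x hx
    have hgx_lt : V (g x) < δ := (hgx.trans (mul_le_of_le_one_left (hV x) hc1)).trans_lt hx
    calc V (g^[m + 1] x) = V (g^[m] (g x)) := rfl
      _ ≤ c ^ m * V (g x) := ih _ hgx_lt
      _ ≤ c ^ m * (c * V x) := by gcongr
      _ = c ^ (m + 1) * V x := by ring

theorem tendsto_iterate_of_le_mul {E : Type*} [SeminormedAddCommGroup E] {g : E → E}
    {V : E → ℝ} {δ c : ℝ} (hV : ∀ x, ‖x‖ ≤ V x) (hc0 : 0 ≤ c) (hc1 : c < 1)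
    (hg : ∀ x, V x < δ → V (g x) ≤ c * V x) {x : E} (hx : V x < δ) :
    Tendsto (fun m => g^[m] x) atTop (𝓝 0) := by
  refine squeeze_zero_norm (fun m => (hV _).trans (Function.iterate_le_pow_mul_of_le_mul
    (fun y => (norm_nonneg y).trans (hV y)) hc0 hc1.le hg m x hx)) ?_
  simpa using (tendsto_pow_atTop_nhds_zero_of_lt_one hc0 hc1).mul_const (V x)

theorem stmt_13_general (N : ℕ) (f : (Fin N → ℝ) → (Fin N → ℝ))
    (h0 : f 0 = 0)
    (D : (Fin N → ℝ) →L[ℝ] (Fin N → ℝ)) (hD : HasFDerivAt f D 0)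
    (heig : ∀ μ : ℂ,
      ((LinearMap.toMatrix' (D : (Fin N → ℝ) →ₗ[ℝ] (Fin N → ℝ))).map
        Complex.ofReal).charpoly.IsRoot μ → ‖μ‖ < 1) :
    ∃ ν : (Fin N → ℝ) → ℝ,
      (∀ x, 0 ≤ ν x) ∧ (∀ x, ν x = 0 ↔ x = 0) ∧
      (∀ (a : ℝ) x, ν (a • x) = |a| * ν x) ∧
      (∀ x y, ν (x + y) ≤ ν x + ν y) ∧
      ∃ δ > (0:ℝ), ∃ c : ℝ, 0 ≤ c ∧ c < 1 ∧
        (∀ x, ν x < δ → ν (f x) ≤ c * ν x) ∧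
        (∀ x, ν x < δ →
          Filter.Tendsto (fun n => f^[n] x) Filter.atTop (nhds 0)) := by
  obtain ⟨n, hn, hDn⟩ := D.exists_norm_pow_lt_one heig
  set ν := D.adaptedSeminorm n
  have hν : ∀ x, ‖x‖ ≤ ν x := ContinuousLinearMap.norm_le_adaptedSeminorm hn
  obtain ⟨ρ, hρ0, hρ1, hDν⟩ := ContinuousLinearMap.exists_adaptedSeminorm_apply_le hDn
  obtain ⟨δ, hδ, hfν⟩ := hD.exists_seminorm_contraction h0 ν
    ContinuousLinearMap.adaptedSeminorm_le hν hρ1 hDν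
  refine ⟨ν, apply_nonneg ν, fun x => ⟨fun hx => norm_le_zero_iff.1 (hx ▸ hν x), ?_⟩,
    fun a x => by rw [map_smul_eq_mul, Real.norm_eq_abs], map_add_le_add ν,
    δ, hδ, (1 + ρ) / 2, by linarith, by linarith, hfν,
    fun x hx => tendsto_iterate_of_le_mul hν (by linarith) (by linarith) hfν hx⟩
  rintro rfl
  exact map_zero ν

/-- If `f : ℝ^N → ℝ^N` is continuous, differentiable at `0`, `f 0 = 0`, and all
complex eigenvalues of `Df(0)` have modulus `< 1`, then `0` is locally
asymptotically stable: for some norm `ν`, `f` is a uniform contraction on a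
`ν`-ball around `0` and all orbits starting there converge to `0`. -/
theorem stmt_13 (N : ℕ) (f : (Fin N → ℝ) → (Fin N → ℝ))
    (hcont : Continuous f) (h0 : f 0 = 0)
    (D : (Fin N → ℝ) →L[ℝ] (Fin N → ℝ)) (hD : HasFDerivAt f D 0)
    (heig : ∀ μ : ℂ,
      ((LinearMap.toMatrix' (D : (Fin N → ℝ) →ₗ[ℝ] (Fin N → ℝ))).map
        Complex.ofReal).charpoly.IsRoot μ → ‖μ‖ < 1) :
    ∃ ν : (Fin N → ℝ) → ℝ,
      (∀ x, 0 ≤ ν x) ∧ (∀ x, ν x = 0 ↔ x = 0) ∧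
      (∀ (a : ℝ) x, ν (a • x) = |a| * ν x) ∧
      (∀ x y, ν (x + y) ≤ ν x + ν y) ∧
      ∃ δ > (0:ℝ), ∃ c : ℝ, 0 ≤ c ∧ c < 1 ∧
        (∀ x, ν x < δ → ν (f x) ≤ c * ν x) ∧
        (∀ x, ν x < δ →
          Filter.Tendsto (fun n => f^[n] x) Filter.atTop (nhds 0)) :=
  stmt_13_general N f h0 D hD heig
end

section
/- Let f : ℝ^N → ℝ^N be continuous, differentiable at 0, with f(0) = 0, and suppose all eigenvalues of Df(0) have absolute value strictly greater than 1. Then 0 is a local repellor: there is δ > 0 and c > 1 with ‖f(x)‖ ≥ c‖x‖ (in a suitable norm) for all x with ‖x‖ < δ, so every nonzero orbit leaves the δ-ball. -/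
/-!
As every eigenvalue of `D` has modulus `> 1`, the spectral radius of `D⁻¹` (computed on the
complexification) is `< 1`, so Gelfand's formula gives `r < 1` and `n ≥ 1` with
`‖x‖ ≤ rⁿ ‖Dⁿ x‖`. The adapted norm `ν x = ∑_{k<n} rᵏ ‖Dᵏ x‖` then satisfies
`ν x ≤ r ν (D x)`: `D` expands `ν` by the factor `r⁻¹ > 1`. Since `f = D + o(x)` at `0`, on a
small `ν`-ball `f` still expands `ν` by some `c > 1`, and a nonzero orbit that stayed in the ball
would have `ν` growing like `cⁿ`.
-/

open Filter NNReal Finset Topology Asymptotics Matrix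

theorem spectrum.eventually_nnnorm_pow_lt_pow {A : Type*} [NormedRing A] [NormedAlgebra ℂ A]
    [CompleteSpace A] {a : A} {r : ℝ≥0} (h : spectralRadius ℂ a < r) :
    ∀ᶠ n in atTop, ‖a ^ n‖₊ < r ^ n := by
  filter_upwards [(pow_nnnorm_pow_one_div_tendsto_nhds_spectralRadius a).eventually_lt_const h,
    eventually_gt_atTop 0] with n hlt hn
  rw [one_div, ENNReal.rpow_inv_lt_iff (by positivity), ENNReal.rpow_natCast] at hlt
  exact_mod_cast hlt

theorem spectrum.spectralRadius_inv_lt_one {A : Type*} [NormedRing A] [NormedAlgebra ℂ A]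
    [CompleteSpace A] [Nontrivial A] (u : Aˣ) (h : ∀ z ∈ spectrum ℂ (u : A), 1 < ‖z‖) :
    spectralRadius ℂ (↑u⁻¹ : A) < 1 := by
  refine spectrum.spectralRadius_lt_of_forall_lt _ fun z hz => ?_
  rw [← spectrum.map_inv, Set.mem_inv] at hz
  have := h _ hz
  rw [norm_inv] at this
  exact_mod_cast lt_of_not_ge fun h1 => (inv_le_one_of_one_le₀ h1).not_gt this

section LinftyOpNorm

attribute [local instance] Matrix.linftyOpNormedAddCommGroup Matrix.linftyOpNormedSpace
  Matrix.linftyOpNormedRing Matrix.linftyOpNormedAlgebra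

variable {ι : Type*} [Fintype ι] [DecidableEq ι]

theorem Matrix.exists_norm_le_pow_mul_norm_pow_mulVec (A : Matrix ι ι ℂ)
    (h : ∀ μ, A.charpoly.IsRoot μ → 1 < ‖μ‖) :
    ∃ r : ℝ≥0, 0 < r ∧ r < 1 ∧ ∃ n, 0 < n ∧ ∀ z, ‖z‖ ≤ r ^ n * ‖(A ^ n) *ᵥ z‖ := by
  rcases isEmpty_or_nonempty ι with hι | hι
  · refine ⟨1 / 2, by norm_num, by norm_num, 1, one_pos, fun z => ?_⟩
    simp [Subsingleton.elim z 0]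
  have hspec : ∀ μ ∈ spectrum ℂ A, 1 < ‖μ‖ := fun μ hμ =>
    h μ (mem_spectrum_iff_isRoot_charpoly.1 hμ)
  obtain ⟨u, rfl⟩ : IsUnit A :=
    spectrum.isUnit_of_zero_notMem ℂ fun h0 => (hspec 0 h0).not_ge (by simp)
  obtain ⟨r, hρr, hr1⟩ :=
    ENNReal.lt_iff_exists_nnreal_btwn.1 (spectrum.spectralRadius_inv_lt_one u hspec)
  obtain ⟨n, hpow, hn⟩ :=
    ((spectrum.eventually_nnnorm_pow_lt_pow hρr).and (eventually_gt_atTop 0)).exists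
  refine ⟨r, ENNReal.coe_pos.1 (hρr.trans_le' bot_le), by exact_mod_cast hr1, n, hn, fun z => ?_⟩
  calc ‖z‖ = ‖(↑u⁻¹ ^ n * ↑u ^ n : Matrix ι ι ℂ) *ᵥ z‖ := by
        rw [← Units.val_pow_eq_pow_val, ← Units.val_pow_eq_pow_val, ← Units.val_mul, inv_pow,
          inv_mul_cancel, Units.val_one, one_mulVec]
    _ ≤ ‖(↑u⁻¹ ^ n : Matrix ι ι ℂ)‖ * ‖(↑u ^ n : Matrix ι ι ℂ) *ᵥ z‖ := by
        rw [← mulVec_mulVec]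
        exact linfty_opNorm_mulVec _ _
    _ ≤ r ^ n * ‖(↑u ^ n : Matrix ι ι ℂ) *ᵥ z‖ := by
        gcongr
        exact_mod_cast hpow.le

end LinftyOpNorm

theorem ContinuousLinearMap.exists_norm_le_pow_mul_norm_pow_apply {ι : Type*} [Fintype ι]
    [DecidableEq ι] (T : (ι → ℝ) →L[ℝ] (ι → ℝ))
    (h : ∀ μ : ℂ, ((LinearMap.toMatrix' (T : (ι → ℝ) →ₗ[ℝ] (ι → ℝ))).map
      Complex.ofReal).charpoly.IsRoot μ → 1 < ‖μ‖) :
    ∃ r : ℝ≥0, 0 < r ∧ r < 1 ∧ ∃ n, 0 < n ∧ ∀ x, ‖x‖ ≤ r ^ n * ‖(T ^ n) x‖ := by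
  set M := LinearMap.toMatrix' (T : (ι → ℝ) →ₗ[ℝ] (ι → ℝ))
  obtain ⟨r, hr0, hr1, n, hn, hM⟩ :=
    (M.map Complex.ofReal).exists_norm_le_pow_mul_norm_pow_mulVec h
  refine ⟨r, hr0, hr1, n, hn, fun x => ?_⟩
  have hnorm : ∀ y : ι → ℝ, ‖Complex.ofReal ∘ y‖ = ‖y‖ := by
    simp [Pi.norm_def, Function.comp_def]
  have hmap :
      (M.map Complex.ofReal) ^ n *ᵥ (Complex.ofReal ∘ x) = Complex.ofReal ∘ (T ^ n) x := by
    have hT : (T ^ n) x = M ^ n *ᵥ x := by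
      rw [← Matrix.toLin'_apply, Matrix.toLin'_pow, Matrix.toLin'_toMatrix',
        ← ContinuousLinearMap.toLinearMap_pow]
      rfl
    ext i
    rw [Function.comp_apply, hT, ← Complex.ofRealHom_eq_coe, RingHom.map_mulVec,
      ← RingHom.mapMatrix_apply, map_pow]
    rfl
  simpa only [hnorm, hmap] using hM (Complex.ofReal ∘ x)

section AdaptedSeminorm

variable {𝕜 E : Type*} [NontriviallyNormedField 𝕜] [NormedAddCommGroup E] [NormedSpace 𝕜 E]

noncomputable def adaptedSeminorm (T : E →L[𝕜] E) (n : ℕ) (r : ℝ≥0) : Seminorm 𝕜 E :=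
  Seminorm.of (fun x => ∑ k ∈ range n, (r : ℝ) ^ k * ‖(T ^ k) x‖)
    (fun x y => by
      simp only [map_add, ← sum_add_distrib, ← mul_add]
      gcongr
      exact norm_add_le _ _)
    (fun a x => by simp only [map_smul, norm_smul, mul_sum, mul_left_comm])

variable (T : E →L[𝕜] E) (n : ℕ) (r : ℝ≥0)

theorem adaptedSeminorm_apply (x : E) :
    adaptedSeminorm T n r x = ∑ k ∈ range n, (r : ℝ) ^ k * ‖(T ^ k) x‖ :=
  rfl

theorem norm_le_adaptedSeminorm {n : ℕ} (hn : 0 < n) (x : E) :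
    ‖x‖ ≤ adaptedSeminorm T n r x := by
  rw [adaptedSeminorm_apply]
  simpa only [pow_zero, one_mul, one_apply_eq_self] using single_le_sum
    (f := fun k => (r : ℝ) ^ k * ‖(T ^ k) x‖) (fun k _ => by positivity) (mem_range.2 hn)

theorem adaptedSeminorm_le (x : E) :
    adaptedSeminorm T n r x ≤ (∑ k ∈ range n, (r : ℝ) ^ k * ‖T ^ k‖) * ‖x‖ := by
  rw [adaptedSeminorm_apply, sum_mul]
  refine sum_le_sum fun k _ => ?_
  rw [mul_assoc]
  exact mul_le_mul_of_nonneg_left ((T ^ k).le_opNorm x) (by positivity)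

theorem adaptedSeminorm_le_mul_apply {x : E} (hx : ‖x‖ ≤ r ^ n * ‖(T ^ n) x‖) :
    adaptedSeminorm T n r x ≤ r * adaptedSeminorm T n r (T x) := by
  have hshift : r * adaptedSeminorm T n r (T x) + ‖x‖ =
      adaptedSeminorm T n r x + r ^ n * ‖(T ^ n) x‖ := by
    have hstep : ∀ k,
        (r : ℝ) * ((r : ℝ) ^ k * ‖(T ^ k) (T x)‖) = r ^ (k + 1) * ‖(T ^ (k + 1)) x‖ :=
      fun k => by rw [pow_succ T, mul_apply_eq_comp, pow_succ, mul_assoc, mul_left_comm]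
    simp only [adaptedSeminorm_apply, mul_sum, hstep]
    simpa using (sum_range_succ' (fun k => (r : ℝ) ^ k * ‖(T ^ k) x‖) n).symm.trans
      (sum_range_succ _ n)
  linarith

end AdaptedSeminorm

theorem exists_le_apply_iterate_of_expanding {α : Type*} {g : α → α} {ν : α → ℝ} {δ c : ℝ}
    (hc : 1 < c) (hexp : ∀ x, ν x < δ → c * ν x ≤ ν (g x)) {x : α} (hx : 0 < ν x) :
    ∃ n, δ ≤ ν (g^[n] x) := by
  by_contra! hstay
  have hgrow : ∀ n, c ^ n * ν x ≤ ν (g^[n] x) := by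
    intro n
    induction n with
    | zero => simp
    | succ n ih =>
      rw [Function.iterate_succ_apply', pow_succ', mul_assoc]
      exact (mul_le_mul_of_nonneg_left ih (by positivity)).trans (hexp _ (hstay n))
  obtain ⟨n, hn⟩ := pow_unbounded_of_one_lt (δ / ν x) hc
  exact (hstay n).not_ge (((div_lt_iff₀ hx).1 hn).le.trans (hgrow n))

theorem exists_mul_le_apply_of_hasFDerivAt {𝕜 E : Type*} [NontriviallyNormedField 𝕜]
    [NormedAddCommGroup E] [NormedSpace 𝕜 E] {f : E → E} {T : E →L[𝕜] E}
    (hf : HasFDerivAt f T 0) (hf0 : f 0 = 0) (p : Seminorm 𝕜 E) {C a : ℝ}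
    (hle : ∀ x, ‖x‖ ≤ p x) (hC : ∀ x, p x ≤ C * ‖x‖) (ha : 1 < a)
    (hexp : ∀ x, a * p x ≤ p (T x)) :
    ∃ δ > 0, ∃ c, 1 < c ∧ ∀ x, p x < δ → c * p x ≤ p (f x) := by
  have hlo : (fun x => p (f x - T x)) =o[𝓝 0] fun x => p x := by
    have hp : (fun x => p (f x - T x)) =O[𝓝 0] fun x => f x - T x :=
      .of_bound C (.of_forall fun x => by simpa [abs_of_nonneg (apply_nonneg p _)] using hC _)
    have hnorm : (fun x : E => x) =O[𝓝 0] fun x => p x :=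
      .of_bound 1 (.of_forall fun x => by simpa [abs_of_nonneg (apply_nonneg p _)] using hle x)
    have hlin : (fun x => f x - T x) =o[𝓝 0] fun x => x := by simpa [hf0] using hf.isLittleO
    exact hp.trans_isLittleO (hlin.trans_isBigO hnorm)
  obtain ⟨δ, hδ, hball⟩ := Metric.eventually_nhds_iff.1 (hlo.def (by linarith : 0 < (a - 1) / 2))
  refine ⟨δ, hδ, (a + 1) / 2, by linarith, fun x hx => ?_⟩
  have hsmall : p (f x - T x) ≤ (a - 1) / 2 * p x := by
    simpa [abs_of_nonneg (apply_nonneg p _)] using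
      hball (show dist x 0 < δ by simpa using (hle x).trans_lt hx)
  have htri : p (T x) ≤ p (f x) + p (f x - T x) := by
    simpa [map_sub_rev p] using map_add_le_add p (f x) (T x - f x)
  linarith [hexp x]

theorem stmt_14_general (N : ℕ) (f : (Fin N → ℝ) → (Fin N → ℝ))
    (h0 : f 0 = 0)
    (D : (Fin N → ℝ) →L[ℝ] (Fin N → ℝ)) (hD : HasFDerivAt f D 0)
    (heig : ∀ μ : ℂ,
      ((LinearMap.toMatrix' (D : (Fin N → ℝ) →ₗ[ℝ] (Fin N → ℝ))).map
        Complex.ofReal).charpoly.IsRoot μ → 1 < ‖μ‖) :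
    ∃ ν : (Fin N → ℝ) → ℝ,
      (∀ x, 0 ≤ ν x) ∧ (∀ x, ν x = 0 ↔ x = 0) ∧
      (∀ (a : ℝ) x, ν (a • x) = |a| * ν x) ∧
      (∀ x y, ν (x + y) ≤ ν x + ν y) ∧
      ∃ δ > (0:ℝ), ∃ c : ℝ, 1 < c ∧
        (∀ x, ν x < δ → c * ν x ≤ ν (f x)) ∧
        (∀ x, x ≠ 0 → ν x < δ → ∃ n : ℕ, δ ≤ ν (f^[n] x)) := by
  obtain ⟨r, hr0, hr1, n, hn, hDn⟩ := D.exists_norm_le_pow_mul_norm_pow_apply heig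
  set ν := adaptedSeminorm D n r
  have hν : ∀ x, ‖x‖ ≤ ν x := norm_le_adaptedSeminorm D r hn
  have hν0 : ∀ x, ν x = 0 ↔ x = 0 := fun x =>
    ⟨fun h => norm_le_zero_iff.1 (h ▸ hν x), fun h => h ▸ map_zero ν⟩
  have hr0' : (0 : ℝ) < r := hr0
  have hexp : ∀ x, (r : ℝ)⁻¹ * ν x ≤ ν (D x) := fun x =>
    (inv_mul_le_iff₀ hr0').2 (adaptedSeminorm_le_mul_apply D n r (hDn x))
  obtain ⟨δ, hδ, c, hc, hfν⟩ := exists_mul_le_apply_of_hasFDerivAt hD h0 ν hν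
    (adaptedSeminorm_le D n r) ((one_lt_inv₀ hr0').2 hr1) hexp
  refine ⟨ν, apply_nonneg ν, hν0, fun a x => by rw [map_smul_eq_mul, Real.norm_eq_abs],
    map_add_le_add ν, δ, hδ, c, hc, hfν, fun x hx _ => ?_⟩
  exact exists_le_apply_iterate_of_expanding hc hfν
    ((apply_nonneg ν x).lt_of_ne' (mt (hν0 x).1 hx))

/-- If `f : ℝ^N → ℝ^N` is continuous, differentiable at `0`, `f 0 = 0`, and all
complex eigenvalues of `Df(0)` have modulus `> 1`, then `0` is a local repellor:
for some norm `ν` there are `δ > 0` and `c > 1` with `ν (f x) ≥ c * ν x`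
whenever `ν x < δ`, so every nonzero orbit leaves the `δ`-ball. -/
theorem stmt_14 (N : ℕ) (f : (Fin N → ℝ) → (Fin N → ℝ))
    (hcont : Continuous f) (h0 : f 0 = 0)
    (D : (Fin N → ℝ) →L[ℝ] (Fin N → ℝ)) (hD : HasFDerivAt f D 0)
    (heig : ∀ μ : ℂ,
      ((LinearMap.toMatrix' (D : (Fin N → ℝ) →ₗ[ℝ] (Fin N → ℝ))).map
        Complex.ofReal).charpoly.IsRoot μ → 1 < ‖μ‖) :
    ∃ ν : (Fin N → ℝ) → ℝ,
      (∀ x, 0 ≤ ν x) ∧ (∀ x, ν x = 0 ↔ x = 0) ∧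
      (∀ (a : ℝ) x, ν (a • x) = |a| * ν x) ∧
      (∀ x y, ν (x + y) ≤ ν x + ν y) ∧
      ∃ δ > (0:ℝ), ∃ c : ℝ, 1 < c ∧
        (∀ x, ν x < δ → c * ν x ≤ ν (f x)) ∧
        (∀ x, x ≠ 0 → ν x < δ → ∃ n : ℕ, δ ≤ ν (f^[n] x)) :=
  stmt_14_general N f h0 D hD heig
end

section
/- Let f : ℝ² → ℝ² be a continuous injective SO(2)-equivariant map with f(0) = 0, and suppose the induced radial map g : [0,∞) → [0,∞), g(‖p‖) = ‖f(p)‖, has 0 as its only fixed point and 0 is a local attractor for g. Then 0 is a global attractor for f: fⁿ(p) → 0 for every p ∈ ℝ². -/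
/-!
Since `‖fⁿ z‖ = gⁿ ‖z‖`, it suffices that every orbit of `g` in `[0, ∞)` tends to `0`.
On `[0, ∞)` the map `g` agrees with `r ↦ ‖f r‖`, so it is continuous there. As `g` has no
positive fixed point, the intermediate value theorem forces `g r - r` to have constant sign on
`(0, ∞)`, and local attraction rules out `g r > r`. Hence `g r < r` for `r > 0`: every orbit
decreases to a limit, which is a fixed point of `g`, i.e. `0`.
-/

open Filter Set Function Topology

theorem isFixedPt_of_tendsto_iterate_of_mapsTo {α : Type*} [TopologicalSpace α] [T2Space α]
    {f : α → α} {s : Set α} {x y : α} (hs : MapsTo f s s) (hx : x ∈ s)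
    (hy : Tendsto (fun n => f^[n] x) atTop (𝓝 y)) (hf : ContinuousWithinAt f s y) :
    IsFixedPt f y := by
  have hy' : Tendsto (fun n => f^[n] x) atTop (𝓝[s] y) :=
    tendsto_nhdsWithin_of_tendsto_nhds_of_eventually_within _ hy
      (Eventually.of_forall fun n => hs.iterate n hx)
  refine tendsto_nhds_unique ((tendsto_add_atTop_iff_nat 1).1 ?_) hy
  simp only [iterate_succ' f]
  exact hf.tendsto.comp hy'

section RadialDynamics

variable {g : ℝ → ℝ}

theorem exists_pos_map_lt_self_of_tendsto_iterate {r : ℝ} (hr : 0 < r)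
    (hlim : Tendsto (fun n => g^[n] r) atTop (𝓝 0)) : ∃ s > 0, g s < s := by
  by_contra! h
  have hmaps : MapsTo g (Ici r) (Ici r) := fun s hs => le_trans hs (h s (hr.trans_le hs))
  have : r ≤ 0 := ge_of_tendsto' hlim fun n => hmaps.iterate n self_mem_Ici
  linarith

theorem map_lt_self_of_map_lt_self (hg : ContinuousOn g (Ioi 0)) (hfix : ∀ r > 0, g r ≠ r)
    {s : ℝ} (hs : 0 < s) (hgs : g s < s) {r : ℝ} (hr : 0 < r) : g r < r := by
  by_contra! h
  obtain ⟨c, hc, hgc⟩ :=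
    isPreconnected_Ioi.intermediate_value₂ hs hr hg continuousOn_id hgs.le h
  exact hfix c hc hgc

theorem tendsto_iterate_zero_of_map_le_self (hg : ContinuousOn g (Ici 0))
    (hmaps : MapsTo g (Ici 0) (Ici 0)) (hle : ∀ r ≥ 0, g r ≤ r)
    (hfix : ∀ r ≥ 0, g r = r → r = 0) {r : ℝ} (hr : 0 ≤ r) :
    Tendsto (fun n => g^[n] r) atTop (𝓝 0) := by
  have hmem : ∀ n, 0 ≤ g^[n] r := fun n => hmaps.iterate n hr
  have hanti : Antitone fun n => g^[n] r := antitone_nat_of_succ_le fun n => by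
    rw [iterate_succ_apply']
    exact hle _ (hmem n)
  have hlim := tendsto_atTop_ciInf hanti ⟨0, forall_mem_range.2 hmem⟩
  have hL : 0 ≤ ⨅ n, g^[n] r := le_ciInf hmem
  rwa [hfix _ hL (isFixedPt_of_tendsto_iterate_of_mapsTo hmaps hr hlim (hg _ hL))] at hlim

end RadialDynamics

theorem stmt_16_general (f : ℂ → ℂ) (hcont : Continuous f) (g : ℝ → ℝ)
    (hg : ∀ z : ℂ, ‖f z‖ = g ‖z‖)
    (hfix : ∀ r : ℝ, 0 ≤ r → (g r = r ↔ r = 0))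
    (hloc : ∃ ε > (0:ℝ), ∀ r : ℝ, 0 ≤ r → r < ε →
      Filter.Tendsto (fun n => g^[n] r) Filter.atTop (nhds 0)) :
    ∀ z : ℂ, Filter.Tendsto (fun n => f^[n] z) Filter.atTop (nhds 0) := by
  obtain ⟨ε, hε, hloc⟩ := hloc
  have hg_ofReal : ∀ r : ℝ, 0 ≤ r → ‖f r‖ = g r := fun r hr => by
    rw [hg, Complex.norm_of_nonneg hr]
  have hgcont : ContinuousOn g (Ici 0) :=
    (continuous_norm.comp (hcont.comp Complex.continuous_ofReal)).continuousOn.congr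
      fun r hr => (hg_ofReal r hr).symm
  have hmaps : MapsTo g (Ici 0) (Ici 0) := fun r hr => hg_ofReal r hr ▸ norm_nonneg _
  obtain ⟨s, hs, hgs⟩ := exists_pos_map_lt_self_of_tendsto_iterate (half_pos hε)
    (hloc _ (half_pos hε).le (half_lt_self hε))
  have hlt : ∀ r > 0, g r < r := fun r =>
    map_lt_self_of_map_lt_self (hgcont.mono Ioi_subset_Ici_self)
      (fun r hr h => hr.ne' ((hfix r hr.le).1 h)) hs hgs
  have hle : ∀ r ≥ 0, g r ≤ r := fun r hr => by
    rcases hr.eq_or_lt with rfl | hr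
    · exact ((hfix 0 le_rfl).2 rfl).le
    · exact (hlt r hr).le
  intro z
  rw [tendsto_zero_iff_norm_tendsto_zero]
  simp only [(Semiconj.iterate_right hg · z)]
  exact tendsto_iterate_zero_of_map_le_self hgcont hmaps hle (fun r hr => (hfix r hr).1)
    (norm_nonneg z)

/-- Let `f` be a continuous injective `SO(2)`-equivariant map of the plane with
`f 0 = 0`, whose induced radial map `g` has `0` as its only fixed point on
`[0,∞)` and `0` is a local attractor for `g`. Then `0` is a global attractor
for `f`. -/
theorem stmt_16 (f : ℂ → ℂ) (hcont : Continuous f) (hinj : Function.Injective f)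
    (hequiv : ∀ (θ : ℝ) (z : ℂ),
      f (Complex.exp (θ * Complex.I) * z) = Complex.exp (θ * Complex.I) * f z)
    (h0 : f 0 = 0) (g : ℝ → ℝ)
    (hg : ∀ z : ℂ, ‖f z‖ = g ‖z‖)
    (hfix : ∀ r : ℝ, 0 ≤ r → (g r = r ↔ r = 0))
    (hloc : ∃ ε > (0:ℝ), ∀ r : ℝ, 0 ≤ r → r < ε →
      Filter.Tendsto (fun n => g^[n] r) Filter.atTop (nhds 0)) :
    ∀ z : ℂ, Filter.Tendsto (fun n => f^[n] z) Filter.atTop (nhds 0) :=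
  stmt_16_general f hcont g hg hfix hloc
end

section
/- The map f(x,y) = (−a x³ + (a−1)x, −y/2) with 0 < a < 1 is equivariant under the group D₂ generated by (x,y) ↦ (−x,−y) and (x,y) ↦ (x,−y), has the origin as its unique fixed point, the eigenvalues of Df(0) have absolute value less than 1, and yet f possesses a 2-periodic orbit, namely the points (±1, 0) satisfy f(1,0) = (−1,0) and f(−1,0) = (1,0). -/
/-!
The linear part of `f` at the origin is `diag(a - 1, -1/2)`, a contraction for `0 < a < 2`, and
a fixed point `(x, y)` must satisfy `y = 0` and `x (a x² + 2 - a) = 0`, forcing `x = 0`. Local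
contraction says nothing globally, however: the cubic term sends `1` to `-a + (a - 1) = -1`, and
by the symmetry `p ↦ -p` then `-1` back to `1`.
-/

open ContinuousLinearMap

noncomputable def cubicMap (a : ℝ) (p : ℝ × ℝ) : ℝ × ℝ :=
  (-a * p.1 ^ 3 + (a - 1) * p.1, -p.2 / 2)

lemma cubicMap_neg (a : ℝ) (p : ℝ × ℝ) : cubicMap a (-p) = -cubicMap a p := by
  simp only [cubicMap, Prod.fst_neg, Prod.snd_neg, Prod.neg_mk]
  congr 1 <;> ring

lemma cubicMap_reflect (a : ℝ) (p : ℝ × ℝ) :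
    cubicMap a (p.1, -p.2) = ((cubicMap a p).1, -(cubicMap a p).2) := by
  simp only [cubicMap]
  congr 1
  ring

lemma cubicMap_eq_self_iff {a : ℝ} (ha0 : 0 ≤ a) (ha2 : a < 2) {p : ℝ × ℝ} :
    cubicMap a p = p ↔ p = 0 := by
  refine ⟨fun h => ?_, fun h => by simp [h, cubicMap]⟩
  obtain ⟨hx, hy⟩ := Prod.ext_iff.1 h
  simp only [cubicMap] at hx hy
  have hfactor : p.1 * (a * p.1 ^ 2 + (2 - a)) = 0 := by linarith
  have hpos : 0 < a * p.1 ^ 2 + (2 - a) := by positivity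
  exact Prod.ext (by simpa [hpos.ne'] using hfactor) (by simpa using (by linarith : p.2 = 0))

lemma hasFDerivAt_cubicMap (a : ℝ) (p : ℝ × ℝ) :
    HasFDerivAt (cubicMap a)
      (((-3 * a * p.1 ^ 2 + (a - 1)) • fst ℝ ℝ ℝ).prod ((-1 / 2 : ℝ) • snd ℝ ℝ ℝ)) p := by
  have hx : HasDerivAt (fun x : ℝ => -a * x ^ 3 + (a - 1) * x) (-3 * a * p.1 ^ 2 + (a - 1)) p.1 :=
    (((hasDerivAt_pow 3 p.1).const_mul (-a)).add ((hasDerivAt_id p.1).const_mul (a - 1))).congr_deriv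
      (by norm_num; ring)
  have hy : HasDerivAt (fun y : ℝ => -y / 2) (-1 / 2) p.2 := by
    simpa using (hasDerivAt_id p.2).neg.div_const 2
  refine ((hx.hasFDerivAt.comp p hasFDerivAt_fst).prodMk
    (hy.hasFDerivAt.comp p hasFDerivAt_snd)).congr_fderiv ?_
  ext <;> simp [mul_comm]

lemma cubicMap_one_zero (a : ℝ) : cubicMap a (1, 0) = (-1, 0) := by
  simp only [cubicMap]
  congr 1 <;> ring

lemma cubicMap_neg_one_zero (a : ℝ) : cubicMap a (-1, 0) = (1, 0) := by
  rw [show ((-1 : ℝ), (0 : ℝ)) = -(1, 0) by simp, cubicMap_neg, cubicMap_one_zero]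
  simp

/-- The map `f(x,y) = (-a x³ + (a-1) x, -y/2)` with `0 < a < 1` is
`D₂`-equivariant, has the origin as unique fixed point, the eigenvalues
`a - 1` and `-1/2` of its Jacobian `Df(0) = diag(a-1, -1/2)` have absolute
value `< 1`, and yet `(1,0)`, `(-1,0)` form a 2-periodic orbit. -/
theorem stmt_17 (a : ℝ) (ha0 : 0 < a) (ha1 : a < 1)
    (f : ℝ × ℝ → ℝ × ℝ)
    (hf : ∀ p : ℝ × ℝ, f p = (-a * p.1 ^ 3 + (a - 1) * p.1, -p.2 / 2)) :
    (∀ p : ℝ × ℝ, f (-p.1, -p.2) = (-(f p).1, -(f p).2)) ∧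
    (∀ p : ℝ × ℝ, f (p.1, -p.2) = ((f p).1, -(f p).2)) ∧
    (∀ p : ℝ × ℝ, f p = p ↔ p = 0) ∧
    (∃ D : ℝ × ℝ →L[ℝ] ℝ × ℝ, HasFDerivAt f D 0 ∧
      (∀ p : ℝ × ℝ, D p = ((a - 1) * p.1, -p.2 / 2)) ∧
      |a - 1| < 1 ∧ |(-1/2 : ℝ)| < 1) ∧
    f (1, 0) = (-1, 0) ∧ f (-1, 0) = (1, 0) ∧ f (1, 0) ≠ (1, 0) := by
  obtain rfl : f = cubicMap a := funext hf
  refine ⟨fun p => cubicMap_neg a p, cubicMap_reflect a,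
    fun p => cubicMap_eq_self_iff ha0.le (by linarith),
    ⟨_, hasFDerivAt_cubicMap a 0, fun p => ?_, abs_lt.2 ⟨by linarith, by linarith⟩,
      by norm_num [abs_lt]⟩,
    cubicMap_one_zero a, cubicMap_neg_one_zero a, by rw [cubicMap_one_zero]; norm_num⟩
  simp only [prod_apply, smul_apply, coe_fst', coe_snd', smul_eq_mul, Prod.fst_zero]
  congr 1 <;> ring
end
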